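/- The set of gates {ΛZ, J(θ) for all θ ∈ [0,2π)} generates any one-qubit unitary: every 2×2 unitary matrix U can be written as a product of finitely many matrices of the form J(θ) up to a global phase. -/

import Mathlib

/-!
Since `H * H = 1` and `Z(0) = 1`, the product `J(0) J(α) J(2t) J(γ)` equals `Z(α) (H Z(2t) H) Z(γ)`,
and `H Z(2t) H = e^{it} Xrot t` with `Xrot t = exp (-i t X)`. Every `2 × 2` unitary has, up to a
phase, such a `Z`-`X`-`Z` Euler decomposition: its rows are `(a, b)` and `δ (-b̄, ā)` with
`|a| = cos t`, `|b| = sin t` and `|δ| = 1`. Finally `J` is `2π`-periodic, so all angles may be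
taken in `[0, 2π)`.
-/

noncomputable section

open Matrix

def Hgate : Matrix (Fin 2) (Fin 2) ℂ := ((Real.sqrt 2 : ℂ))⁻¹ • !![1, 1; 1, -1]
def Zgate (θ : ℝ) : Matrix (Fin 2) (Fin 2) ℂ := !![1, 0; 0, Complex.exp (θ * Complex.I)]
def Jgate (θ : ℝ) : Matrix (Fin 2) (Fin 2) ℂ := Hgate * Zgate θ

open Complex ComplexConjugate

lemma ofReal_sqrt_two_inv_mul_self : ((Real.sqrt 2 : ℂ))⁻¹ * ((Real.sqrt 2 : ℂ))⁻¹ = 2⁻¹ := by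
  rw [← mul_inv, ← ofReal_mul, Real.mul_self_sqrt zero_le_two, ofReal_ofNat]

lemma Hgate_mul_self : Hgate * Hgate = 1 := by
  rw [Hgate, smul_mul, Matrix.mul_smul, smul_smul, ofReal_sqrt_two_inv_mul_self]
  ext i j; fin_cases i <;> fin_cases j <;> norm_num [mul_fin_two]

lemma Zgate_zero : Zgate 0 = 1 := by
  simp [Zgate, one_fin_two]

lemma exp_toIcoMod_two_pi_mul_I (a θ : ℝ) :
    exp (toIcoMod Real.two_pi_pos a θ * I) = exp (θ * I) := by
  rw [← sub_add_cancel (toIcoMod Real.two_pi_pos a θ) θ, toIcoMod_sub_self_eq_mul]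
  push_cast
  rw [add_mul, exp_add, mul_assoc, neg_mul, exp_neg, exp_int_mul_two_pi_mul_I, inv_one, one_mul]

lemma Jgate_comp_toIcoMod (a : ℝ) : Jgate ∘ toIcoMod Real.two_pi_pos a = Jgate := by
  ext1 θ
  simp only [Function.comp_apply, Jgate, Zgate, exp_toIcoMod_two_pi_mul_I]

def Xrot (t : ℝ) : Matrix (Fin 2) (Fin 2) ℂ :=
  !![cos t, -I * sin t; -I * sin t, cos t]

lemma Hgate_mul_Zgate_mul_Hgate (t : ℝ) :
    Hgate * Zgate (2 * t) * Hgate = exp (t * I) • Xrot t := by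
  have hexp2 : exp (↑(2 * t) * I) = exp (t * I) ^ 2 := by
    rw [← exp_nat_mul]; push_cast; ring_nf
  rw [Hgate, smul_mul, smul_mul, Matrix.mul_smul, smul_smul, ofReal_sqrt_two_inv_mul_self, Zgate,
    hexp2, exp_mul_I]
  simp only [Xrot, mul_fin_two, smul_of, smul_cons, smul_empty, smul_eq_mul,
    EmbeddingLike.apply_eq_iff_eq, vecCons_inj, and_true]
  refine ⟨⟨?_, ?_⟩, ?_, ?_⟩ <;>
    linear_combination (-1 / 2 : ℂ) * sin_sq_add_cos_sq (t : ℂ) + sin (t : ℂ) ^ 2 / 2 * I_sq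

lemma prod_map_Jgate_eq_smul_Zgate_mul_Xrot_mul_Zgate (α t γ : ℝ) :
    ([0, α, 2 * t, γ].map Jgate).prod = exp (t * I) • (Zgate α * Xrot t * Zgate γ) := by
  calc ([0, α, 2 * t, γ].map Jgate).prod
      = Hgate * Hgate * Zgate α * (Hgate * Zgate (2 * t) * Hgate) * Zgate γ := by
        simp only [List.map_cons, List.map_nil, List.prod_cons, List.prod_nil, Jgate, Zgate_zero,
          Matrix.mul_one, Matrix.mul_assoc]
    _ = exp (t * I) • (Zgate α * Xrot t * Zgate γ) := by
        rw [Hgate_mul_self, Hgate_mul_Zgate_mul_Hgate, Matrix.one_mul, Matrix.mul_smul, smul_mul]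

lemma exists_eq_of_mem_unitaryGroup_fin_two {U : Matrix (Fin 2) (Fin 2) ℂ}
    (hU : U ∈ unitaryGroup (Fin 2) ℂ) :
    ∃ a b δ : ℂ, ‖δ‖ = 1 ∧ ‖a‖ ^ 2 + ‖b‖ ^ 2 = 1 ∧
      U = !![a, b; -δ * conj b, δ * conj a] := by
  have hδ : ‖U.det‖ = 1 := CStarRing.norm_of_mem_unitary (det_of_mem_unitary hU)
  have hinv : star U = U.det⁻¹ • U.adjugate := by
    rw [← Ring.inverse_eq_inv', ← Matrix.inv_def]
    exact (inv_eq_left_inv hU.1).symm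
  have hδ0 : U.det ≠ 0 := norm_ne_zero_iff.mp (hδ.trans_ne one_ne_zero)
  have hentry : ∀ i j, conj (U j i) = U.det⁻¹ * U.adjugate i j := fun i j => by
    simpa using congrFun₂ hinv i j
  have h11 : U 1 1 = U.det * conj (U 0 0) := by
    simp [hentry, adjugate_fin_two, hδ0]
  have h10 : U 1 0 = -U.det * conj (U 0 1) := by
    simp [hentry, adjugate_fin_two, hδ0]
  refine ⟨U 0 0, U 0 1, U.det, hδ, ?_, ?_⟩
  · have hdet := det_fin_two U
    rw [h11, h10] at hdet
    have : (U.det : ℂ) * ((‖U 0 0‖ ^ 2 + ‖U 0 1‖ ^ 2 : ℝ) : ℂ) = U.det * 1 := by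
      push_cast [← mul_conj']; linear_combination -hdet
    exact_mod_cast mul_left_cancel₀ hδ0 this
  · rw [← h11, ← h10]; exact eta_fin_two U

lemma exists_cos_mul_sin_mul {a b : ℂ} (h : ‖a‖ ^ 2 + ‖b‖ ^ 2 = 1) :
    ∃ (t : ℝ) (p q : ℂ), ‖p‖ = 1 ∧ ‖q‖ = 1 ∧ a = cos t * p ∧ b = sin t * q := by
  have ha : ‖a‖ ≤ 1 := by nlinarith [norm_nonneg b, norm_nonneg a]
  have hcos : Real.cos (Real.arccos ‖a‖) = ‖a‖ := Real.cos_arccos (by linarith [norm_nonneg a]) ha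
  have hsin : Real.sin (Real.arccos ‖a‖) = ‖b‖ := by
    rw [Real.sin_arccos, show 1 - ‖a‖ ^ 2 = ‖b‖ ^ 2 by linarith, Real.sqrt_sq (norm_nonneg b)]
  refine ⟨Real.arccos ‖a‖, exp (arg a * I), exp (arg b * I), norm_exp_ofReal_mul_I _,
    norm_exp_ofReal_mul_I _, ?_, ?_⟩
  · rw [← ofReal_cos, hcos, norm_mul_exp_arg_mul_I]
  · rw [← ofReal_sin, hsin, norm_mul_exp_arg_mul_I]

lemma mul_conj_of_norm_eq_one {z : ℂ} (hz : ‖z‖ = 1) : z * conj z = 1 := by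
  rw [mul_conj', hz]; norm_num

theorem exists_eq_smul_Zgate_mul_Xrot_mul_Zgate {U : Matrix (Fin 2) (Fin 2) ℂ}
    (hU : U ∈ unitaryGroup (Fin 2) ℂ) :
    ∃ (c : ℂ) (t α γ : ℝ), ‖c‖ = 1 ∧ U = c • (Zgate α * Xrot t * Zgate γ) := by
  obtain ⟨a, b, δ, hδ, hab, rfl⟩ := exists_eq_of_mem_unitaryGroup_fin_two hU
  obtain ⟨t, p, q, hp, hq, rfl, rfl⟩ := exists_cos_mul_sin_mul hab
  -- `α` and `γ` are read off from the off-diagonal entries `-δ (sin t) q̄` and `(sin t) q`.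
  obtain ⟨α, hα⟩ := (norm_eq_one_iff (-I * δ * conj q * conj p)).mp (by simp [hδ, hp, hq])
  obtain ⟨γ, hγ⟩ := (norm_eq_one_iff (I * q * conj p)).mp (by simp [hp, hq])
  refine ⟨p, t, α, γ, hp, ?_⟩
  have hpp := mul_conj_of_norm_eq_one hp
  have hqq := mul_conj_of_norm_eq_one hq
  simp only [Zgate, Xrot, hα, hγ, mul_fin_two, smul_of, smul_cons, smul_empty, smul_eq_mul,
    EmbeddingLike.apply_eq_iff_eq, vecCons_inj, and_true, map_mul, ← cos_conj, ← sin_conj,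
    conj_ofReal]
  refine ⟨⟨?_, ?_⟩, ?_, ?_⟩
  · ring
  · linear_combination (-sin t * q) * hpp + p * sin t * q * conj p * I_sq
  · linear_combination δ * sin t * conj q * hpp - p * δ * conj q * conj p * sin t * I_sq
  · linear_combination -δ * cos t * conj p * q * conj q * hpp - δ * cos t * conj p * hqq
      + p * δ * conj q * conj p * cos t * q * conj p * I_sq

theorem stmt5 (U : Matrix (Fin 2) (Fin 2) ℂ) (hU : U ∈ Matrix.unitaryGroup (Fin 2) ℂ) :
    ∃ (c : ℂ) (l : List ℝ), ‖c‖ = 1 ∧ (∀ θ ∈ l, θ ∈ Set.Ico 0 (2 * Real.pi)) ∧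
      U = c • (l.map Jgate).prod := by
  obtain ⟨c, t, α, γ, hc, rfl⟩ := exists_eq_smul_Zgate_mul_Xrot_mul_Zgate hU
  refine ⟨c * (exp (t * I))⁻¹, [0, α, 2 * t, γ].map (toIcoMod Real.two_pi_pos 0), ?_, ?_, ?_⟩
  · rw [norm_mul, norm_inv, norm_exp_ofReal_mul_I, hc, inv_one, mul_one]
  · intro θ hθ
    obtain ⟨x, -, rfl⟩ := List.mem_map.mp hθ
    exact toIcoMod_mem_Ico' _ x
  · rw [List.map_map, Jgate_comp_toIcoMod, prod_map_Jgate_eq_smul_Zgate_mul_Xrot_mul_Zgate,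
      smul_smul, inv_mul_cancel_right₀ (exp_ne_zero _)]
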